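/- Let d_t : X_t → L⁰_t(ℕ) be 𝓕_t-stable and sequentially continuous (L⁰_t(ℕ) carrying the 𝓕_t-conditional metric extending the discrete metric), and let the control set Θ_t satisfy (c1) ∅ ≠ Θ_t(x) ⊆ L⁰_t(ℝ)^{d_t(x)} for all x ∈ X_t and (c2) Θ_t(Σ_k 1_{A_k}x_k) = Σ_k 1_{A_k}Θ_t(x_k) ⊆ L⁰_t(ℝ)^{d_t(Σ_k 1_{A_k}x_k)}. Suppose further that: (i) {(x,z) ∈ X_t × L⁰_t(ℝ)^{d_t(x)} : z ∈ Θ_t(x)} is sequentially closed; (ii) for every sequence (x_n) in X_t with x_n → x ∈ X_t a.s. there exist M ∈ L⁰_{t,+} and a measurable subsequence n_1 < n_2 < … in L⁰_t(ℕ) such that Θ_t(x_{n_k}) ⊆ L⁰_t(ℝ)^{d_t(x)} for all k ≥ k₀ for some k₀ ∈ L⁰_t(ℕ), and d_{L⁰_t(ℝ)^{d_t(x)}}(z,0) ≤ M for every z ∈ ⋃_{k≥k₀} Θ_t(x_{n_k}). Then Θ_t satisfies (c1)–(c4). -/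
import Mathlib


open MeasureTheory Filter Topology Set

namespace CondPaper

variable {Ω : Type*}

/-- A countable partition of `Ω` (up to `μ`-null sets) into `G`-measurable sets. -/
def IsCondPartition {_ : MeasurableSpace Ω} (μ : Measure Ω) (G : MeasurableSpace Ω)
    (A : ℕ → Set Ω) : Prop :=
  (∀ k, MeasurableSet[G] (A k)) ∧
    (∀ i j, i ≠ j → μ (A i ∩ A j) = 0) ∧ μ (⋃ k, A k)ᶜ = 0

/-- A `G`-conditional metric on a nonempty set `X` (Definition 2.1 of the paper). -/
structure CondMetric {_ : MeasurableSpace Ω} (μ : Measure Ω) (G : MeasurableSpace Ω)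
    (X : Type*) : Type _ where
  d : X → X → Ω → ℝ
  measurable_d : ∀ x y, Measurable[G] (d x y)
  nonneg : ∀ x y, ∀ᵐ ω ∂μ, 0 ≤ d x y ω
  eq_iff : ∀ x y, (d x y =ᵐ[μ] fun _ => (0 : ℝ)) ↔ x = y
  symm : ∀ x y, d x y =ᵐ[μ] d y x
  triangle : ∀ x y z, ∀ᵐ ω ∂μ, d x z ω ≤ d x y ω + d y z ω
  concat_spec : ∀ (A : ℕ → Set Ω), IsCondPartition μ G A → ∀ x : ℕ → X,
    ∃! x₀ : X, ∀ k, ∀ᵐ ω ∂μ, ω ∈ A k → d x₀ (x k) ω = 0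

namespace CondMetric

variable {m : MeasurableSpace Ω} {μ : Measure Ω} {G : MeasurableSpace Ω} {X Z : Type*}

/-- The concatenation `Σₖ 1_{A k} (x k)` along a partition. -/
noncomputable def concat (D : CondMetric μ G X) (A : ℕ → Set Ω)
    (hA : IsCondPartition μ G A) (x : ℕ → X) : X :=
  (D.concat_spec A hA x).choose

/-- Almost sure convergence `x n → x₀` in a conditional metric space. -/
def TendstoAE (D : CondMetric μ G X) (x : ℕ → X) (x₀ : X) : Prop :=
  ∀ᵐ ω ∂μ, Tendsto (fun n => D.d x₀ (x n) ω) atTop (nhds (0 : ℝ))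

lemma isCondPartition_level {n : Ω → ℕ} (hn : Measurable[G] n) (μ : @Measure Ω m) :
    IsCondPartition μ G fun j => {ω | n ω = j} := by
  refine ⟨fun j => hn (MeasurableSet.singleton j), ?_, ?_⟩
  · intro i j hij
    have h : {ω | n ω = i} ∩ {ω | n ω = j} = (∅ : Set Ω) := by
      ext ω
      simp only [Set.mem_inter_iff, Set.mem_setOf_eq, Set.mem_empty_iff_false, iff_false]
      rintro ⟨h1, h2⟩
      exact hij (h1 ▸ h2 ▸ rfl)
    simp [h]
  · have h : (⋃ j, {ω | n ω = j}) = (Set.univ : Set Ω) := by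
      ext ω; simp
    simp [h]

/-- Given a `G`-measurable index `n : Ω → ℕ`, the element `x_{n}` of the
"measurable subsequence", i.e. the concatenation of `(x j)` along `({n = j})_j`. -/
noncomputable def subseq (D : CondMetric μ G X) (x : ℕ → X) (n : Ω → ℕ)
    (hn : Measurable[G] n) : X :=
  D.concat (fun j => {ω | n ω = j}) (isCondPartition_level hn μ) x

end CondMetric

variable {m : MeasurableSpace Ω} {μ : Measure Ω} {G : MeasurableSpace Ω} {X Z : Type*}

/-- A strictly increasing sequence `n₁ < n₂ < ⋯` of `G`-measurable `ℕ`-valued random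
variables (indexing a measurable subsequence). -/
structure MIdx {_ : MeasurableSpace Ω} (μ : Measure Ω) (G : MeasurableSpace Ω) where
  n : ℕ → Ω → ℕ
  meas : ∀ k, Measurable[G] (n k)
  lt : ∀ k, ∀ᵐ ω ∂μ, n k ω < n (k + 1) ω

/-- A `G`-stable subset: nonempty and closed under countable concatenations. -/
def StableSet (D : CondMetric μ G X) (H : Set X) : Prop :=
  H.Nonempty ∧ ∀ (A : ℕ → Set Ω) (hA : IsCondPartition μ G A) (x : ℕ → X),
    (∀ k, x k ∈ H) → D.concat A hA x ∈ H

/-- A sequentially closed subset of a conditional metric space. -/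
def SeqClosedSet (D : CondMetric μ G X) (H : Set X) : Prop :=
  ∀ (x : ℕ → X) (x₀ : X), (∀ k, x k ∈ H) → D.TendstoAE x x₀ → x₀ ∈ H

/-- Conditional sequential compactness: every sequence has a measurable
subsequence converging a.s. to an element of `K`. -/
def CondSeqCompact (D : CondMetric μ G X) (K : Set X) : Prop :=
  ∀ z : ℕ → X, (∀ k, z k ∈ K) →
    ∃ (N : MIdx μ G) (z₀ : X), z₀ ∈ K ∧
      D.TendstoAE (fun k => D.subseq z (N.n k) (N.meas k)) z₀

/-- Condition (c1): nonempty control sets. -/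
def ControlC1 (Θ : X → Set Z) : Prop := ∀ x, (Θ x).Nonempty

/-- Condition (c2): `𝓕ₜ`-stability of the state-dependent control set. -/
def ControlC2 (DX : CondMetric μ G X) (DZ : CondMetric μ G Z) (Θ : X → Set Z) : Prop :=
  ∀ (A : ℕ → Set Ω) (hA : IsCondPartition μ G A) (x : ℕ → X),
    Θ (DX.concat A hA x) =
      {w | ∃ z : ℕ → Z, (∀ k, z k ∈ Θ (x k)) ∧ w = DZ.concat A hA z}

/-- Condition (c3): conditional sequential compactness of each control set. -/
def ControlC3 (DZ : CondMetric μ G Z) (Θ : X → Set Z) : Prop :=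
  ∀ x, CondSeqCompact DZ (Θ x)

/-- Condition (c4): conditional outer semi-continuity of the control set. -/
def ControlC4 (DX : CondMetric μ G X) (DZ : CondMetric μ G Z) (Θ : X → Set Z) : Prop :=
  ∀ (x : ℕ → X) (x₀ : X), DX.TendstoAE x x₀ → ∀ z : ℕ → Z, (∀ n, z n ∈ Θ (x n)) →
    ∃ (N : MIdx μ G) (z' : ℕ → Z), (∀ k, z' k ∈ Θ x₀) ∧
      ∀ᵐ ω ∂μ, Tendsto
        (fun k => DZ.d (DZ.subseq z (N.n k) (N.meas k)) (z' k) ω) atTop (nhds (0 : ℝ))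

/-- Membership in `L̲⁰(G)`: a `G`-measurable random variable with values in `ℝ ∪ {-∞}`. -/
def InLbar {_ : MeasurableSpace Ω} (μ : Measure Ω) (G : MeasurableSpace Ω)
    (y : Ω → EReal) : Prop :=
  Measurable[G] y ∧ ∀ᵐ ω ∂μ, y ω < ⊤

end CondPaper

namespace CondPaper

/-- Membership in the conditional Euclidean space `L⁰ₜ(ℝ)ⁿ` of measurable dimension
`n : Ω → ℕ` (elements represented by componentwise `G`-measurable functions whose
components from index `n ω` on vanish a.s.). -/
def MemRdim {Ω : Type*} {_ : MeasurableSpace Ω} (μ : Measure Ω) (G : MeasurableSpace Ω)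
    (n : Ω → ℕ) (f : Ω → ℕ → ℝ) : Prop :=
  (∀ j, Measurable[G] fun ω => f ω j) ∧ ∀ᵐ ω ∂μ, ∀ j, n ω ≤ j → f ω j = 0

/-- The (blockwise Euclidean) distance between two elements of conditional Euclidean
spaces, evaluated at `ω`. -/
noncomputable def rdimDist {Ω : Type*} (f g : Ω → ℕ → ℝ) (ω : Ω) : ℝ :=
  Real.sqrt (∑' j, (f ω j - g ω j) ^ 2)

lemma measurable_comp_nat {β : Type*} [MeasurableSpace β] {G : MeasurableSpace Ω}
    {n : Ω → ℕ} (hn : Measurable[G] n) {f : ℕ → Ω → β}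
    (hf : ∀ i, Measurable[G] (f i)) : Measurable[G] fun ω => f (n ω) ω := by
  intro s hs
  have : (fun ω => f (n ω) ω) ⁻¹' s = ⋃ i, {ω | n ω = i} ∩ f i ⁻¹' s := by
    ext ω
    constructor
    · intro h; exact Set.mem_iUnion.2 ⟨n ω, rfl, h⟩
    · rintro h
      obtain ⟨i, hi, hmem⟩ := Set.mem_iUnion.1 h
      simpa [show n ω = i from hi] using hmem
  rw [this]
  exact MeasurableSet.iUnion fun i =>
    (hn (MeasurableSet.singleton i)).inter (hf i hs)

lemma measurable_sInf_nat {G : MeasurableSpace Ω} {Q : ℕ → Ω → Prop}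
    (hQ : ∀ n, MeasurableSet[G] {ω | Q n ω}) (hne : ∀ ω, ∃ n, Q n ω) :
    Measurable[G] fun ω => sInf {n | Q n ω} := by
  apply measurable_to_countable'
  intro i
  have : (fun ω => sInf {n | Q n ω}) ⁻¹' {i}
      = {ω | Q i ω} ∩ ⋂ j, ⋂ (_ : j < i), {ω | Q j ω}ᶜ := by
    ext ω
    simp only [Set.mem_preimage, Set.mem_singleton_iff, Set.mem_inter_iff,
      Set.mem_iInter, Set.mem_compl_iff, Set.mem_setOf_eq]
    constructor
    · rintro rfl
      exact ⟨Nat.sInf_mem (hne ω), fun j hj => Nat.notMem_of_lt_sInf hj⟩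
    · rintro ⟨hQi, hlt⟩
      refine le_antisymm (Nat.sInf_le hQi) ?_
      by_contra h
      exact hlt _ (lt_of_not_ge h) (Nat.sInf_mem (hne ω))
  rw [this]
  exact (hQ i).inter (MeasurableSet.iInter fun j =>
    MeasurableSet.iInter fun _ => (hQ j).compl)

open Classical in
/-- Measurable one-dimensional Bolzano–Weierstrass. -/
lemma bw1 {G : MeasurableSpace Ω} (a : ℕ → Ω → ℝ) (ha : ∀ n, Measurable[G] (a n))
    (B : Ω → ℝ) (hB : Measurable[G] B) (hbd : ∀ n ω, |a n ω| ≤ B ω) :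
    ∃ (σ : ℕ → Ω → ℕ) (c : Ω → ℝ), (∀ k, Measurable[G] (σ k)) ∧
      (∀ ω, StrictMono fun k => σ k ω) ∧ Measurable[G] c ∧
      ∀ ω, Tendsto (fun k => a (σ k ω) ω) atTop (nhds (c ω)) := by
  have B0 : ∀ ω, 0 ≤ B ω := fun ω => le_trans (abs_nonneg _) (hbd 0 ω)
  -- bisection intervals
  set S : (Ω → ℝ × ℝ) → Set Ω := fun q =>
    {ω | ∀ N, ∃ n, N ≤ n ∧ (q ω).1 ≤ a n ω ∧ a n ω ≤ ((q ω).1 + (q ω).2) / 2} with hS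
  set p : ℕ → Ω → ℝ × ℝ := fun k => Nat.rec (fun ω => (-B ω, B ω))
    (fun _ q => (S q).piecewise (fun ω => ((q ω).1, ((q ω).1 + (q ω).2) / 2))
      (fun ω => (((q ω).1 + (q ω).2) / 2, (q ω).2))) k with hp
  have hpsucc : ∀ k, p (k + 1) = (S (p k)).piecewise
      (fun ω => ((p k ω).1, ((p k ω).1 + (p k ω).2) / 2))
      (fun ω => (((p k ω).1 + (p k ω).2) / 2, (p k ω).2)) := fun k => rfl
  -- measurability of intervals
  have hSmeas : ∀ q : Ω → ℝ × ℝ, Measurable[G] q → MeasurableSet[G] (S q) := by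
    intro q hq
    have : S q = ⋂ N, ⋃ n, ⋃ (_ : N ≤ n),
        ({ω | (q ω).1 ≤ a n ω} ∩ {ω | a n ω ≤ ((q ω).1 + (q ω).2) / 2}) := by
      ext ω
      simp only [hS, Set.mem_setOf_eq, Set.mem_iInter, Set.mem_iUnion,
        Set.mem_inter_iff, exists_prop]
    rw [this]
    refine MeasurableSet.iInter fun N => MeasurableSet.iUnion fun n =>
      MeasurableSet.iUnion fun _ => MeasurableSet.inter ?_ ?_
    · exact measurableSet_le (hq.fst) (ha n)
    · exact measurableSet_le (ha n) (((hq.fst).add hq.snd).div_const 2)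
  have hpmeas : ∀ k, Measurable[G] (p k) := by
    intro k
    induction k with
    | zero => exact (hB.neg).prodMk hB
    | succ k ih =>
      rw [hpsucc k]
      exact Measurable.piecewise (hSmeas _ ih)
        ((ih.fst).prodMk (((ih.fst).add ih.snd).div_const 2))
        ((((ih.fst).add ih.snd).div_const 2).prodMk ih.snd)
  -- invariant: infinitely often in the interval
  have hInv : ∀ k ω, ∀ N, ∃ n, N ≤ n ∧ (p k ω).1 ≤ a n ω ∧ a n ω ≤ (p k ω).2 := by
    intro k
    induction k with
    | zero =>
      intro ω N
      exact ⟨N, le_refl N, (abs_le.1 (hbd N ω)).1, (abs_le.1 (hbd N ω)).2⟩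
    | succ k ih =>
      intro ω N
      rw [hpsucc k]
      by_cases h : ω ∈ S (p k)
      · rw [Set.piecewise_eq_of_mem _ _ _ h]
        exact h N
      · rw [Set.piecewise_eq_of_notMem _ _ _ h]
        simp only [hS, Set.mem_setOf_eq, not_forall, not_exists, not_and] at h
        obtain ⟨N₀, hN₀⟩ := h
        obtain ⟨n, hn, h1, h2⟩ := ih ω (max N N₀)
        refine ⟨n, le_trans (le_max_left _ _) hn, ?_, h2⟩
        by_contra hlt
        exact hN₀ n (le_trans (le_max_right _ _) hn) h1 (le_of_not_ge hlt)
  -- interval length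
  have hlen : ∀ k ω, (p k ω).2 - (p k ω).1 = 2 * B ω / 2 ^ k := by
    intro k
    induction k with
    | zero =>
      intro ω
      show B ω - -B ω = 2 * B ω / 2 ^ 0
      rw [pow_zero, div_one]; ring
    | succ k ih =>
      intro ω
      rw [hpsucc k]
      by_cases h : ω ∈ S (p k)
      · rw [Set.piecewise_eq_of_mem _ _ _ h]
        show ((p k ω).1 + (p k ω).2) / 2 - (p k ω).1 = 2 * B ω / 2 ^ (k + 1)
        rw [pow_succ, ← div_div, ← ih ω]; ring
      · rw [Set.piecewise_eq_of_notMem _ _ _ h]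
        show (p k ω).2 - ((p k ω).1 + (p k ω).2) / 2 = 2 * B ω / 2 ^ (k + 1)
        rw [pow_succ, ← div_div, ← ih ω]; ring
  have hlohi : ∀ k ω, (p k ω).1 ≤ (p k ω).2 := by
    intro k ω
    have h1 := hlen k ω
    have h2 : (0:ℝ) ≤ 2 * B ω / 2 ^ k :=
      div_nonneg (by linarith [B0 ω]) (by positivity)
    linarith
  have hstep : ∀ k ω, (p k ω).1 ≤ (p (k+1) ω).1 ∧ (p (k+1) ω).2 ≤ (p k ω).2 := by
    intro k ω
    rw [hpsucc k]
    by_cases h : ω ∈ S (p k)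
    · rw [Set.piecewise_eq_of_mem _ _ _ h]
      exact ⟨le_refl _, by simp only; linarith [hlohi k ω]⟩
    · rw [Set.piecewise_eq_of_notMem _ _ _ h]
      exact ⟨by simp only; linarith [hlohi k ω], le_refl _⟩
  have hloMono : ∀ ω, Monotone fun k => (p k ω).1 :=
    fun ω => monotone_nat_of_le_succ fun k => (hstep k ω).1
  have hhiAnti : ∀ ω, Antitone fun k => (p k ω).2 :=
    fun ω => antitone_nat_of_succ_le fun k => (hstep k ω).2
  have hlohi' : ∀ j k ω, (p j ω).1 ≤ (p k ω).2 := by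
    intro j k ω
    calc (p j ω).1 ≤ (p (max j k) ω).1 := hloMono ω (le_max_left _ _)
      _ ≤ (p (max j k) ω).2 := hlohi _ ω
      _ ≤ (p k ω).2 := hhiAnti ω (le_max_right _ _)
  -- limit
  have hcauchy : ∀ ω, CauchySeq fun k => (p k ω).1 := by
    intro ω
    apply cauchySeq_of_le_geometric (1/2 : ℝ) (2 * B ω) (by norm_num)
    intro n
    rw [Real.dist_eq, abs_sub_comm, abs_of_nonneg (by linarith [(hstep n ω).1])]
    have h1 : (p (n+1) ω).1 ≤ (p n ω).2 := hlohi' (n+1) n ω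
    have h2 := hlen n ω
    have h3 : (2:ℝ) * B ω * (1/2) ^ n = 2 * B ω / 2 ^ n := by
      rw [one_div, inv_pow, ← div_eq_mul_inv]
    rw [← h3] at h2
    linarith
  have hc : ∀ ω, ∃ L, Tendsto (fun k => (p k ω).1) atTop (nhds L) :=
    fun ω => cauchySeq_tendsto_of_complete (hcauchy ω)
  choose c hc using hc
  have hcmeas : Measurable[G] c :=
    measurable_of_tendsto_metrizable (fun k => (hpmeas k).fst)
      (tendsto_pi_nhds.2 hc)
  have hclo : ∀ k ω, (p k ω).1 ≤ c ω := fun k ω =>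
    ge_of_tendsto (hc ω) (Filter.eventually_atTop.2 ⟨k, fun j hj => hloMono ω hj⟩)
  have hchi : ∀ k ω, c ω ≤ (p k ω).2 := fun k ω =>
    le_of_tendsto (hc ω) (Filter.eventually_atTop.2 ⟨k, fun j _ => hlohi' j k ω⟩)
  -- the subsequence
  set σ : ℕ → Ω → ℕ := fun k => Nat.rec
    (fun ω => sInf {n | (p 0 ω).1 ≤ a n ω ∧ a n ω ≤ (p 0 ω).2})
    (fun k s ω => sInf {n | s ω < n ∧ (p (k+1) ω).1 ≤ a n ω ∧ a n ω ≤ (p (k+1) ω).2}) k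
    with hσ
  have hne0 : ∀ ω, {n | (p 0 ω).1 ≤ a n ω ∧ a n ω ≤ (p 0 ω).2}.Nonempty := by
    intro ω; obtain ⟨n, _, h⟩ := hInv 0 ω 0; exact ⟨n, h⟩
  have hneS : ∀ k (s : Ω → ℕ) ω,
      {n | s ω < n ∧ (p (k+1) ω).1 ≤ a n ω ∧ a n ω ≤ (p (k+1) ω).2}.Nonempty := by
    intro k s ω
    obtain ⟨n, hn, h⟩ := hInv (k+1) ω (s ω + 1)
    exact ⟨n, Nat.lt_of_succ_le hn, h⟩
  have hσmem : ∀ k ω, (p k ω).1 ≤ a (σ k ω) ω ∧ a (σ k ω) ω ≤ (p k ω).2 := by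
    intro k ω
    cases k with
    | zero => exact Nat.sInf_mem (hne0 ω)
    | succ k => exact (Nat.sInf_mem (hneS k (σ k) ω)).2
  have hσlt : ∀ k ω, σ k ω < σ (k+1) ω := by
    intro k ω
    exact (Nat.sInf_mem (hneS k (σ k) ω)).1
  have hσmeas : ∀ k, Measurable[G] (σ k) := by
    intro k
    induction k with
    | zero =>
      exact measurable_sInf_nat (fun n => (measurableSet_le (hpmeas 0).fst (ha n)).inter
        (measurableSet_le (ha n) (hpmeas 0).snd)) hne0
    | succ k ih =>
      refine measurable_sInf_nat (fun n => ?_) (hneS k (σ k))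
      refine MeasurableSet.inter ?_ (MeasurableSet.inter
        (measurableSet_le (hpmeas (k+1)).fst (ha n))
        (measurableSet_le (ha n) (hpmeas (k+1)).snd))
      have : {ω | σ k ω < n} = ⋃ i, ⋃ (_ : i < n), σ k ⁻¹' {i} := by
        ext ω
        simp only [Set.mem_setOf_eq, Set.mem_iUnion, Set.mem_preimage,
          Set.mem_singleton_iff, exists_prop]
        exact ⟨fun h => ⟨σ k ω, h, rfl⟩, fun ⟨i, hi, he⟩ => he ▸ hi⟩
      show MeasurableSet[G] {ω | σ k ω < n}
      rw [this]
      exact MeasurableSet.iUnion fun i => MeasurableSet.iUnion fun _ =>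
        ih (MeasurableSet.singleton i)
  refine ⟨σ, c, hσmeas, fun ω => strictMono_nat_of_lt_succ fun k => hσlt k ω, hcmeas, ?_⟩
  intro ω
  rw [tendsto_iff_dist_tendsto_zero]
  apply squeeze_zero (fun k => dist_nonneg)
    (g := fun k => 2 * B ω * (1/2) ^ k)
  · intro k
    rw [Real.dist_eq, abs_le]
    have h1 := hσmem k ω
    have h2 := hclo k ω
    have h3 := hchi k ω
    have h4 := hlen k ω
    have h5 : (2:ℝ) * B ω * (1/2) ^ k = 2 * B ω / 2 ^ k := by
      rw [one_div, inv_pow, ← div_eq_mul_inv]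
    constructor <;> linarith
  · simpa using (tendsto_pow_atTop_nhds_zero_of_lt_one
      (by norm_num : (0:ℝ) ≤ 1/2) (by norm_num)).const_mul (2 * B ω)

/-- Measurable diagonal Bolzano–Weierstrass for sequences with values in `ℕ → ℝ`. -/
lemma bwseq {G : MeasurableSpace Ω} (b : ℕ → Ω → ℕ → ℝ)
    (hb : ∀ n j, Measurable[G] fun ω => b n ω j)
    (B : Ω → ℝ) (hB : Measurable[G] B)
    (hbd : ∀ n ω j, |b n ω j| ≤ B ω) :
    ∃ (m : ℕ → Ω → ℕ) (c : Ω → ℕ → ℝ),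
      (∀ k, Measurable[G] (m k)) ∧ (∀ ω, StrictMono fun k => m k ω) ∧
      (∀ j, Measurable[G] fun ω => c ω j) ∧
      ∀ ω j, Tendsto (fun k => b (m k ω) ω j) atTop (nhds (c ω j)) := by
  -- package: a measurable strictly increasing family of indices
  let P := {τ : ℕ → Ω → ℕ // (∀ k, Measurable[G] (τ k)) ∧ ∀ ω, StrictMono fun k => τ k ω}
  have step : ∀ (p : P) (j : ℕ), ∃ q : P,
      (∃ σ : ℕ → Ω → ℕ, (∀ ω, StrictMono fun k => σ k ω) ∧
        ∀ k ω, q.1 k ω = p.1 (σ k ω) ω) ∧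
      ∃ cj : Ω → ℝ, Measurable[G] cj ∧
        ∀ ω, Tendsto (fun k => b (q.1 k ω) ω j) atTop (nhds (cj ω)) := by
    intro p j
    obtain ⟨σ, cj, hσm, hσmono, hcm, hconv⟩ := bw1 (fun k ω => b (p.1 k ω) ω j)
      (fun k => measurable_comp_nat (p.2.1 k) (fun i => hb i j)) B hB
      (fun k ω => hbd (p.1 k ω) ω j)
    refine ⟨⟨fun k ω => p.1 (σ k ω) ω,
      fun k => measurable_comp_nat (hσm k) p.2.1,
      fun ω => fun k k' hk => (p.2.2 ω) (hσmono ω hk)⟩,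
      ⟨σ, hσmono, fun k ω => rfl⟩, ⟨cj, hcm, hconv⟩⟩
  choose next hnext using step
  set F : ℕ → P := fun j => Nat.rec
    ⟨fun k _ => k, fun k => measurable_const, fun ω => strictMono_id⟩
    (fun j p => next p j) j with hF
  have hFsucc : ∀ j, F (j + 1) = next (F j) j := fun j => rfl
  -- extract limits and sigmas
  have Hs : ∀ j, ∃ σ : ℕ → Ω → ℕ, (∀ ω, StrictMono fun k => σ k ω) ∧
      ∀ k ω, (F (j+1)).1 k ω = (F j).1 (σ k ω) ω := fun j => (hnext (F j) j).1
  choose sig hsigmono hsigeq using Hs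
  have Hc : ∀ j, ∃ cj : Ω → ℝ, Measurable[G] cj ∧
      ∀ ω, Tendsto (fun k => b ((F (j+1)).1 k ω) ω j) atTop (nhds (cj ω)) :=
    fun j => (hnext (F j) j).2
  choose cf hcfmeas hcfconv using Hc
  -- convergence propagates to later levels
  have conv : ∀ i j, i < j → ∀ ω,
      Tendsto (fun k => b ((F j).1 k ω) ω i) atTop (nhds (cf i ω)) := by
    intro i j
    induction j with
    | zero => omega
    | succ j ih =>
      intro hij ω
      rcases Nat.lt_succ_iff_lt_or_eq.1 hij with h | h
      · have h1 := ih h ω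
        have h2 : Tendsto (fun k => sig j k ω) atTop atTop :=
          (hsigmono j ω).tendsto_atTop
        have := h1.comp h2
        refine this.congr fun k => ?_
        simp only [Function.comp]
        rw [hsigeq j k ω]
      · subst h
        exact hcfconv i ω
  -- pushing indices down: down j k i ω is the index at level j giving
  -- (F k).1 i ω = (F j).1 (down j k i ω) ω  for k ≥ j
  set down : ℕ → ℕ → ℕ → Ω → ℕ := fun j k => Nat.rec (fun i _ => i)
    (fun k' d i ω => if j ≤ k' then d (sig k' i ω) ω else i) k with hdown
  have hdown0 : ∀ j i ω, down j 0 i ω = i := fun _ _ _ => rfl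
  have hdownsucc : ∀ j k i ω,
      down j (k+1) i ω = if j ≤ k then down j k (sig k i ω) ω else i :=
    fun _ _ _ _ => rfl
  have hdown_eq : ∀ j k, j ≤ k → ∀ i ω, (F k).1 i ω = (F j).1 (down j k i ω) ω := by
    intro j k
    induction k with
    | zero =>
      intro hj i ω
      have : j = 0 := Nat.le_zero.1 hj
      subst this; rfl
    | succ k ih =>
      intro hj i ω
      by_cases h : j ≤ k
      · rw [hdownsucc, if_pos h]
        calc (F (k+1)).1 i ω = (F k).1 (sig k i ω) ω := hsigeq k i ω
          _ = (F j).1 (down j k (sig k i ω) ω) ω := ih h _ ω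
      · rw [hdownsucc, if_neg h]
        have : j = k + 1 := by omega
        subst this; rfl
  have hdown_mono : ∀ j k ω, StrictMono fun i => down j k i ω := by
    intro j k
    induction k with
    | zero => intro ω; exact strictMono_id
    | succ k ih =>
      intro ω i i' hii'
      show down j (k+1) i ω < down j (k+1) i' ω
      by_cases h : j ≤ k
      · rw [hdownsucc, hdownsucc, if_pos h, if_pos h]
        exact ih ω (hsigmono k ω hii')
      · rw [hdownsucc, hdownsucc, if_neg h, if_neg h]
        exact hii'
  -- the diagonal index t j k ω := down j k k ω is strictly increasing for k ≥ j
  have hdiag_lt : ∀ j k ω, j ≤ k → down j k k ω < down j (k+1) (k+1) ω := by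
    intro j k ω hjk
    rw [hdownsucc, if_pos hjk]
    calc down j k k ω < down j k (k+1) ω := hdown_mono j k ω (Nat.lt_succ_self k)
      _ ≤ down j k (sig k (k+1) ω) ω :=
        (hdown_mono j k ω).monotone ((hsigmono k ω).le_apply)
  have hdiag_mono : ∀ j k k' ω, j ≤ k → k ≤ k' → down j k k ω ≤ down j k' k' ω := by
    intro j k k' ω hjk hkk'
    induction k' with
    | zero =>
      have : k = 0 := by omega
      subst this; rfl
    | succ k' ih2 =>
      by_cases h : k ≤ k'
      · exact le_trans (ih2 h) (le_of_lt (hdiag_lt j k' ω (le_trans hjk h)))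
      · have : k = k' + 1 := by omega
        subst this; rfl
  have hdiag_tendsto : ∀ j ω, Tendsto (fun k => down j k k ω) atTop atTop := by
    intro j ω
    have key : ∀ l, l ≤ down j (j + l) (j + l) ω := by
      intro l
      induction l with
      | zero => exact Nat.zero_le _
      | succ l ih =>
        have h1 := hdiag_lt j (j + l) ω (Nat.le_add_right _ _)
        show l + 1 ≤ down j ((j + l) + 1) ((j + l) + 1) ω
        omega
    refine tendsto_atTop_atTop.2 fun N => ⟨j + N, fun k hk => ?_⟩
    exact le_trans (key N) (hdiag_mono j (j+N) k ω (Nat.le_add_right _ _) hk)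
  -- final construction
  refine ⟨fun k ω => (F k).1 k ω, fun ω j => cf j ω,
    fun k => (F k).2.1 k, ?_, fun j => hcfmeas j, ?_⟩
  · intro ω
    apply strictMono_nat_of_lt_succ
    intro k
    calc (F k).1 k ω < (F k).1 (k+1) ω := (F k).2.2 ω (Nat.lt_succ_self k)
      _ ≤ (F k).1 (sig k (k+1) ω) ω := ((F k).2.2 ω).monotone ((hsigmono k ω).le_apply)
      _ = (F (k+1)).1 (k+1) ω := (hsigeq k (k+1) ω).symm
  · intro ω j
    have h1 := conv j (j+1) (Nat.lt_succ_self j) ω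
    have h2 := h1.comp (hdiag_tendsto (j+1) ω)
    refine h2.congr' ?_
    filter_upwards [Filter.eventually_ge_atTop (j+1)] with k hk
    simp only [Function.comp]
    rw [hdown_eq (j+1) k hk k ω]


/-- **Proposition 3.6 (compactness criterion with measurable dimension).** Let
`dₜ : Xₜ → L⁰ₜ(ℕ)` be `𝓕ₜ`-stable and sequentially continuous (for the conditional
discrete metric), and let `Θ` satisfy (c1) `∅ ≠ Θ x ⊆ L⁰ₜ(ℝ)^{dₜ x}`, (c2)
`𝓕ₜ`-stability, (i) a sequentially closed graph, and (ii) local boundedness with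
eventual dimension `dₜ x` along measurable subsequences. Then `Θ` satisfies (c1)–(c4). -/
theorem measurable_dim_control_compactness {Ω : Type*} {m : MeasurableSpace Ω}
    {μ : Measure Ω} [IsProbabilityMeasure μ] {G : MeasurableSpace Ω} (hG : G ≤ m)
    {X : Type*} (DX : CondMetric μ G X)
    (dt : X → Ω → ℕ)
    (hdtmeas : ∀ x, Measurable[G] (dt x))
    -- dₜ is 𝓕ₜ-stable
    (hdtstable : ∀ (A : ℕ → Set Ω) (hA : IsCondPartition μ G A) (xk : ℕ → X),
      ∀ k, ∀ᵐ ω ∂μ, ω ∈ A k → dt (DX.concat A hA xk) ω = dt (xk k) ω)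
    -- dₜ is sequentially continuous (discrete conditional metric on L⁰ₜ(ℕ))
    (hdtcont : ∀ (xk : ℕ → X) (x₀ : X), DX.TendstoAE xk x₀ →
      ∀ᵐ ω ∂μ, ∀ᶠ k in Filter.atTop, dt (xk k) ω = dt x₀ ω)
    (Θ : X → Set (Ω → ℕ → ℝ))
    -- (c1): ∅ ≠ Θ x ⊆ L⁰ₜ(ℝ)^{dₜ x}
    (hc1 : ∀ x, (Θ x).Nonempty ∧ ∀ z ∈ Θ x, MemRdim μ G (dt x) z)
    -- (c2): 𝓕ₜ-stability of Θ
    (hc2 : ∀ (A : ℕ → Set Ω) (hA : IsCondPartition μ G A) (xk : ℕ → X),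
      Θ (DX.concat A hA xk) = {z | (∀ j, Measurable[G] fun ω => z ω j) ∧
        ∃ zk : ℕ → Ω → ℕ → ℝ, (∀ k, zk k ∈ Θ (xk k)) ∧
          ∀ k, ∀ᵐ ω ∂μ, ω ∈ A k → ∀ j, z ω j = zk k ω j})
    -- (i): the graph of Θ is sequentially closed
    (hgraph : ∀ (xk : ℕ → X) (x₀ : X), DX.TendstoAE xk x₀ →
      ∀ zk : ℕ → Ω → ℕ → ℝ, (∀ k, zk k ∈ Θ (xk k)) →
      ∀ z₀ : Ω → ℕ → ℝ, MemRdim μ G (dt x₀) z₀ →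
      (∀ᵐ ω ∂μ, ∀ j, Filter.Tendsto (fun k => zk k ω j) Filter.atTop (nhds (z₀ ω j))) →
      z₀ ∈ Θ x₀)
    -- (ii): boundedness along a measurable subsequence, eventually of dimension dₜ x₀
    (hbdd : ∀ (xk : ℕ → X) (x₀ : X), DX.TendstoAE xk x₀ →
      ∃ (M : Ω → ℝ) (N : MIdx μ G) (k₀ : Ω → ℕ),
        Measurable[G] M ∧ (∀ᵐ ω ∂μ, 0 ≤ M ω) ∧ Measurable[G] k₀ ∧
        ∀ k : ℕ, ∀ z ∈ Θ (DX.subseq xk (N.n k) (N.meas k)),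
          (∀ᵐ ω ∂μ, k₀ ω ≤ k → ∀ j, dt x₀ ω ≤ j → z ω j = 0) ∧
          ∀ᵐ ω ∂μ, k₀ ω ≤ k → rdimDist z (fun _ _ => 0) ω ≤ M ω) :
    -- (c1) and (c2) continue to hold, and moreover:
    (∀ x, (Θ x).Nonempty ∧ ∀ z ∈ Θ x, MemRdim μ G (dt x) z) ∧
    -- (c3): each Θ x is conditionally sequentially compact
    (∀ x, ∀ zk : ℕ → Ω → ℕ → ℝ, (∀ n, zk n ∈ Θ x) →
      ∃ (N : MIdx μ G) (z₀ : Ω → ℕ → ℝ), z₀ ∈ Θ x ∧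
        ∀ᵐ ω ∂μ, Filter.Tendsto (fun k => rdimDist (fun ω' => zk (N.n k ω') ω') z₀ ω)
          Filter.atTop (nhds (0 : ℝ))) ∧
    -- (c4): conditional outer semi-continuity
    (∀ (xk : ℕ → X) (x₀ : X), DX.TendstoAE xk x₀ →
      ∀ zk : ℕ → Ω → ℕ → ℝ, (∀ n, zk n ∈ Θ (xk n)) →
      ∃ (N : MIdx μ G) (z' : ℕ → Ω → ℕ → ℝ), (∀ k, z' k ∈ Θ x₀) ∧
        ∀ᵐ ω ∂μ, Filter.Tendsto
          (fun k => rdimDist (fun ω' => zk (N.n k ω') ω') (z' k) ω)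
          Filter.atTop (nhds (0 : ℝ))) := by
  classical
  have hzero_self : ∀ x : X, DX.TendstoAE (fun _ => x) x := by
    intro x
    have h0 : DX.d x x =ᵐ[μ] fun _ => (0 : ℝ) := (DX.eq_iff x x).2 rfl
    filter_upwards [h0] with ω hω
    simpa [hω] using (tendsto_const_nhds : Tendsto (fun _ : ℕ => (0:ℝ)) atTop (nhds 0))
  -- ==================== the core construction ====================
  have core : ∀ (xk : ℕ → X) (x₀ : X), DX.TendstoAE xk x₀ →
      ∀ zk : ℕ → Ω → ℕ → ℝ, (∀ n, zk n ∈ Θ (xk n)) →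
      ∃ (N : MIdx μ G) (z₀ : Ω → ℕ → ℝ), z₀ ∈ Θ x₀ ∧
        ∀ᵐ ω ∂μ, Filter.Tendsto
          (fun k => rdimDist (fun ω' => zk (N.n k ω') ω') z₀ ω)
          Filter.atTop (nhds (0 : ℝ)) := by
    intro xk x₀ hxconv zk hzk
    have hzkmeas : ∀ n j, Measurable[G] fun ω => zk n ω j :=
      fun n j => ((hc1 (xk n)).2 _ (hzk n)).1 j
    -- measurable mixtures of the controls belong to the control set of the mixture
    have hmem : ∀ (n : Ω → ℕ) (hn : Measurable[G] n),
        (fun ω => zk (n ω) ω) ∈ Θ (DX.subseq xk n hn) := by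
      intro n hn
      show (fun ω => zk (n ω) ω) ∈
        Θ (DX.concat _ (CondMetric.isCondPartition_level hn μ) xk)
      rw [hc2]
      refine ⟨fun j => measurable_comp_nat hn (fun i => hzkmeas i j), zk, hzk, ?_⟩
      intro k
      filter_upwards with ω
      intro hω j
      rw [show n ω = k from hω]
    obtain ⟨M, N, k₀, hMmeas, hMnonneg, hk0meas, hb⟩ := hbdd xk x₀ hxconv
    set w : ℕ → Ω → ℕ → ℝ := fun i ω => zk (N.n i ω) ω with hw
    have hwmeas : ∀ i j, Measurable[G] fun ω => w i ω j :=
      fun i j => measurable_comp_nat (N.meas i) (fun i' => hzkmeas i' j)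
    have hwmem : ∀ i, w i ∈ Θ (DX.subseq xk (N.n i) (N.meas i)) :=
      fun i => hmem (N.n i) (N.meas i)
    set Bf : Ω → ℝ := fun ω => max (M ω) 0 with hBf
    have hBfmeas : Measurable[G] Bf := hMmeas.max measurable_const
    have hBf0 : ∀ ω, 0 ≤ Bf ω := fun ω => le_max_right _ _
    -- master a.e. event: support and bounds for large indices
    have hmaster : ∀ᵐ ω ∂μ, ∀ i, k₀ ω ≤ i →
        (∀ j, dt x₀ ω ≤ j → w i ω j = 0) ∧ (∀ j, |w i ω j| ≤ Bf ω) := by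
      have h1 : ∀ᵐ ω ∂μ, ∀ i, k₀ ω ≤ i → ∀ j, dt x₀ ω ≤ j → w i ω j = 0 :=
        MeasureTheory.ae_all_iff.2 fun i => (hb i (w i) (hwmem i)).1
      have h2 : ∀ᵐ ω ∂μ, ∀ i, k₀ ω ≤ i → rdimDist (w i) (fun _ _ => 0) ω ≤ M ω :=
        MeasureTheory.ae_all_iff.2 fun i => (hb i (w i) (hwmem i)).2
      have h3 : ∀ᵐ ω ∂μ, ∀ i, ∀ j,
          dt (DX.subseq xk (N.n i) (N.meas i)) ω ≤ j → w i ω j = 0 :=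
        MeasureTheory.ae_all_iff.2 fun i => ((hc1 _).2 _ (hwmem i)).2
      filter_upwards [h1, h2, h3, hMnonneg] with ω ha hbb hcc hM0
      intro i hi
      refine ⟨ha i hi, ?_⟩
      intro j
      have hsum : Summable fun j => (w i ω j) ^ 2 := by
        refine summable_of_ne_finset_zero
          (s := Finset.range (dt (DX.subseq xk (N.n i) (N.meas i)) ω)) ?_
        intro j' hj'
        have : dt (DX.subseq xk (N.n i) (N.meas i)) ω ≤ j' := by
          simpa [Finset.mem_range, not_lt] using hj'
        rw [hcc i j' this]
        norm_num
      have hle : (w i ω j) ^ 2 ≤ ∑' j', (w i ω j') ^ 2 :=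
        Summable.le_tsum hsum j fun j' _ => sq_nonneg _
      have hdist : rdimDist (w i) (fun _ _ => 0) ω = Real.sqrt (∑' j', (w i ω j') ^ 2) := by
        unfold rdimDist
        congr 1
        exact tsum_congr fun j' => by ring
      have h5 : |w i ω j| = Real.sqrt ((w i ω j) ^ 2) := (Real.sqrt_sq_eq_abs _).symm
      have h6 : Real.sqrt ((w i ω j) ^ 2) ≤ Real.sqrt (∑' j', (w i ω j') ^ 2) :=
        Real.sqrt_le_sqrt hle
      have h7 : Real.sqrt (∑' j', (w i ω j') ^ 2) ≤ M ω := by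
        rw [← hdist]; exact hbb i hi
      calc |w i ω j| ≤ M ω := by rw [h5]; exact le_trans h6 h7
        _ ≤ Bf ω := le_max_left _ _
    -- truncation
    set b : ℕ → Ω → ℕ → ℝ := fun i ω j =>
      if j < dt x₀ ω then max (-(Bf ω)) (min (Bf ω) (w i ω j)) else 0 with hbdef
    have hbmeas : ∀ i j, Measurable[G] fun ω => b i ω j := by
      intro i j
      have hset : MeasurableSet[G] {ω | j < dt x₀ ω} :=
        (hdtmeas x₀) (show MeasurableSet {d : ℕ | j < d} from trivial)
      exact Measurable.ite hset
        ((hBfmeas.neg).max (hBfmeas.min (hwmeas i j))) measurable_const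
    have hbbd : ∀ i ω j, |b i ω j| ≤ Bf ω := by
      intro i ω j
      by_cases h : j < dt x₀ ω
      · rw [hbdef]; simp only [if_pos h]
        refine abs_le.2 ⟨le_max_left _ _, max_le (by linarith [hBf0 ω]) (min_le_left _ _)⟩
      · rw [hbdef]; simp only [if_neg h, abs_zero]
        exact hBf0 ω
    have hbzero : ∀ i ω j, dt x₀ ω ≤ j → b i ω j = 0 := by
      intro i ω j hj
      rw [hbdef]; simp only [if_neg (not_lt.2 hj)]
    have hbweq : ∀ᵐ ω ∂μ, ∀ i, k₀ ω ≤ i → ∀ j, b i ω j = w i ω j := by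
      filter_upwards [hmaster] with ω hm
      intro i hi j
      by_cases h : j < dt x₀ ω
      · rw [hbdef]; simp only [if_pos h]
        have habs := (hm i hi).2 j
        rw [abs_le] at habs
        rw [min_eq_right habs.2, max_eq_right (by linarith [habs.1])]
      · rw [hbzero i ω j (not_lt.1 h), (hm i hi).1 j (not_lt.1 h)]
    obtain ⟨mm, c, hmmeas, hmmono, hcmeas, hcconv⟩ := bwseq b hbmeas Bf hBfmeas hbbd
    have hczero : ∀ ω j, dt x₀ ω ≤ j → c ω j = 0 := by
      intro ω j hj
      have h1 : (fun k => b (mm k ω) ω j) = fun _ => (0:ℝ) :=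
        funext fun k => hbzero _ ω j hj
      have h2 := hcconv ω j
      rw [h1] at h2
      exact tendsto_nhds_unique h2 tendsto_const_nhds
    have hNmono : ∀ᵐ ω ∂μ, StrictMono fun i => N.n i ω := by
      have := MeasureTheory.ae_all_iff.2 N.lt
      filter_upwards [this] with ω h
      exact strictMono_nat_of_lt_succ h
    have hN'lt : ∀ k, ∀ᵐ ω ∂μ, N.n (mm k ω) ω < N.n (mm (k+1) ω) ω := by
      intro k
      filter_upwards [hNmono] with ω h
      exact h (hmmono ω (Nat.lt_succ_self k))
    set N' : MIdx μ G := ⟨fun k ω => N.n (mm k ω) ω,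
      fun k => measurable_comp_nat (hmmeas k) N.meas, hN'lt⟩ with hN'
    set W : ℕ → Ω → ℕ → ℝ := fun k ω => zk (N'.n k ω) ω with hW
    have hWmem : ∀ k, W k ∈ Θ (DX.subseq xk (N'.n k) (N'.meas k)) :=
      fun k => hmem (N'.n k) (N'.meas k)
    have hidx_ae : ∀ᵐ ω ∂μ, ∀ k, k ≤ N'.n k ω := by
      filter_upwards [hNmono] with ω h
      intro k
      calc k ≤ mm k ω := (hmmono ω).le_apply
        _ ≤ N.n (mm k ω) ω := h.le_apply
    have hWb : ∀ᵐ ω ∂μ, ∀ k, k₀ ω ≤ k → ∀ j, W k ω j = b (mm k ω) ω j := by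
      filter_upwards [hbweq] with ω h
      intro k hk j
      exact (h (mm k ω) (le_trans hk (hmmono ω).le_apply) j).symm
    have hWconv : ∀ᵐ ω ∂μ, ∀ j, Tendsto (fun k => W k ω j) atTop (nhds (c ω j)) := by
      filter_upwards [hWb] with ω h
      intro j
      refine (hcconv ω j).congr' ?_
      filter_upwards [Filter.eventually_ge_atTop (k₀ ω)] with k hk
      exact (h k hk j).symm
    have hcmem : MemRdim μ G (dt x₀) c :=
      ⟨hcmeas, Filter.Eventually.of_forall fun ω j hj => hczero ω j hj⟩
    set yk : ℕ → X := fun k => DX.subseq xk (N'.n k) (N'.meas k) with hyk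
    have hysub : ∀ k i, ∀ᵐ ω ∂μ, N'.n k ω = i → DX.d (yk k) (xk i) ω = 0 := by
      intro k i
      exact (DX.concat_spec (fun j => {ω | N'.n k ω = j})
        (CondMetric.isCondPartition_level (N'.meas k) μ) xk).choose_spec.1 i
    have hytend : DX.TendstoAE yk x₀ := by
      have htri : ∀ᵐ ω ∂μ, ∀ k i,
          DX.d x₀ (yk k) ω ≤ DX.d x₀ (xk i) ω + DX.d (xk i) (yk k) ω :=
        MeasureTheory.ae_all_iff.2 fun k =>
          MeasureTheory.ae_all_iff.2 fun i => DX.triangle x₀ (xk i) (yk k)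
      have hsymm : ∀ᵐ ω ∂μ, ∀ k i, DX.d (xk i) (yk k) ω = DX.d (yk k) (xk i) ω :=
        MeasureTheory.ae_all_iff.2 fun k =>
          MeasureTheory.ae_all_iff.2 fun i => DX.symm (xk i) (yk k)
      have hzero : ∀ᵐ ω ∂μ, ∀ k i, N'.n k ω = i → DX.d (yk k) (xk i) ω = 0 :=
        MeasureTheory.ae_all_iff.2 fun k => MeasureTheory.ae_all_iff.2 fun i => hysub k i
      have hnn : ∀ᵐ ω ∂μ, ∀ k, 0 ≤ DX.d x₀ (yk k) ω :=
        MeasureTheory.ae_all_iff.2 fun k => DX.nonneg x₀ (yk k)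
      filter_upwards [htri, hsymm, hzero, hnn, hidx_ae, hxconv] with ω h1 h2 h3 h4 h5 h6
      have key : ∀ k, DX.d x₀ (yk k) ω ≤ DX.d x₀ (xk (N'.n k ω)) ω := by
        intro k
        have ht := h1 k (N'.n k ω)
        rw [h2 k (N'.n k ω), h3 k (N'.n k ω) rfl] at ht
        linarith
      have hcomp : Tendsto (fun k => DX.d x₀ (xk (N'.n k ω)) ω) atTop (nhds 0) :=
        h6.comp (tendsto_atTop_mono h5 tendsto_id)
      exact squeeze_zero h4 key hcomp
    have hc_in : c ∈ Θ x₀ := hgraph yk x₀ hytend W hWmem c hcmem hWconv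
    refine ⟨N', c, hc_in, ?_⟩
    filter_upwards [hmaster, hWconv] with ω hm hconv
    set D := dt x₀ ω with hD
    have hsum0 : Tendsto
        (fun k => ∑ j ∈ Finset.range D, (W k ω j - c ω j) ^ 2) atTop (nhds 0) := by
      have : (0:ℝ) = ∑ j ∈ Finset.range D, (0:ℝ) := by simp
      rw [this]
      refine tendsto_finset_sum _ fun j _ => ?_
      have h0 : Tendsto (fun k => (W k ω j - c ω j) ^ 2) atTop
          (nhds ((c ω j - c ω j) ^ 2)) := ((hconv j).sub tendsto_const_nhds).pow 2
      simpa using h0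
    have hsqrt : Tendsto
        (fun k => Real.sqrt (∑ j ∈ Finset.range D, (W k ω j - c ω j) ^ 2))
        atTop (nhds 0) := by
      have := (Real.continuous_sqrt.tendsto (0:ℝ)).comp hsum0
      rwa [Real.sqrt_zero] at this
    refine hsqrt.congr' ?_
    filter_upwards [Filter.eventually_ge_atTop (k₀ ω)] with k hk
    have hvan : ∀ j ∉ Finset.range D, (W k ω j - c ω j) ^ 2 = 0 := by
      intro j hj
      have hDj : D ≤ j := by simpa [Finset.mem_range, not_lt] using hj
      have h1 : W k ω j = 0 :=
        (hm (mm k ω) (le_trans hk (hmmono ω).le_apply)).1 j hDj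
      rw [h1, hczero ω j hDj]
      norm_num
    show Real.sqrt (∑ j ∈ Finset.range D, (W k ω j - c ω j) ^ 2)
      = rdimDist (fun ω' => zk (N'.n k ω') ω') c ω
    unfold rdimDist
    rw [tsum_eq_sum hvan]
  -- ==================== conclusion ====================
  refine ⟨hc1, ?_, ?_⟩
  · intro x zkk hzkk
    exact core (fun _ => x) x (hzero_self x) zkk hzkk
  · intro xk x₀ hx zkk hzkk
    obtain ⟨N, z₀, h1, h2⟩ := core xk x₀ hx zkk hzkk
    exact ⟨N, fun _ => z₀, fun _ => h1, h2⟩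


end CondPaper
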